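/- arXiv:2110.02800 — 2 statements merged into one kernel-verified Lean document; each statement's English description precedes it below -/
import Mathlib

section
/- For a Pauli channel Φ(ρ) = (1 - Σpᵢ) ρ + Σᵢ pᵢ σᵢ ρ σᵢ, the maximum over density operators ρ and pure states τ of Tr(Φ(ρ) τ) equals (1 + max_i |λᵢ|)/2, where λᵢ = 1 - 2 Σ_{j≠i} p_j; moreover the maximum is attained at ρ = τ = (I + σ_{i*})/2 with i* = argmax_i |λᵢ| (when λ_{i*} ≥ 0; at ρ = (I - σ_{i*})/2 appropriately when λ_{i*} < 0). -/
open Matrix Complex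
open scoped ComplexOrder

noncomputable def σ : Fin 3 → Matrix (Fin 2) (Fin 2) ℂ
  | 0 => !![0, 1; 1, 0]
  | 1 => !![0, -I; I, 0]
  | 2 => !![1, 0; 0, -1]

noncomputable def pauliChannel (p : Fin 3 → ℝ) (ρ : Matrix (Fin 2) (Fin 2) ℂ) :
    Matrix (Fin 2) (Fin 2) ℂ :=
  ((1 - p 0 - p 1 - p 2 : ℝ) : ℂ) • ρ + ∑ i, ((p i : ℝ) : ℂ) • (σ i * ρ * σ i)

def IsDensity (ρ : Matrix (Fin 2) (Fin 2) ℂ) : Prop := ρ.PosSemidef ∧ ρ.trace = 1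

def IsPure (τ : Matrix (Fin 2) (Fin 2) ℂ) : Prop := IsDensity τ ∧ τ * τ = τ


noncomputable def blochM (a1 a2 a3 : ℝ) : Matrix (Fin 2) (Fin 2) ℂ :=
  (1/2 : ℂ) • !![(1 + a3 : ℂ), (a1 : ℂ) - a2 * I; (a1 : ℂ) + a2 * I, (1 - a3 : ℂ)]

lemma key (p : Fin 3 → ℝ) (a1 a2 a3 b1 b2 b3 : ℝ) :
    ((pauliChannel p (blochM a1 a2 a3) * blochM b1 b2 b3).trace).re =
      (1 + (1 - 2*(p 1 + p 2)) * a1 * b1 + (1 - 2*(p 0 + p 2)) * a2 * b2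
         + (1 - 2*(p 0 + p 1)) * a3 * b3) / 2 := by
  simp only [pauliChannel, blochM, σ, Fin.sum_univ_three]
  simp [Matrix.trace_fin_two, Matrix.mul_apply, Fin.sum_univ_two, Matrix.smul_apply,
    Matrix.add_apply, Complex.ext_iff, Complex.add_re, Complex.mul_re, Complex.mul_im]
  ring

-- Bloch form of (1/2)(1 + s σ i)
lemma bloch_sigma (s : ℝ) : ∀ i : Fin 3,
    (1/2 : ℂ) • (1 + (s : ℂ) • σ i) =
      blochM (if i = 0 then s else 0) (if i = 1 then s else 0) (if i = 2 then s else 0) := by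
  intro i
  fin_cases i <;>
  · ext j k
    fin_cases j <;> fin_cases k <;>
      simp [blochM, σ, Matrix.one_apply, Complex.ext_iff] <;> ring

lemma blochM_isHermitian (a1 a2 a3 : ℝ) : (blochM a1 a2 a3).IsHermitian := by
  ext j k
  fin_cases j <;> fin_cases k <;>
    simp [blochM, Matrix.conjTranspose_apply, Complex.ext_iff]

lemma blochM_trace (a1 a2 a3 : ℝ) : (blochM a1 a2 a3).trace = 1 := by
  simp [blochM, Matrix.trace_fin_two, Complex.ext_iff]
  ring

lemma blochM_pure (a1 a2 a3 : ℝ) (h : a1^2 + a2^2 + a3^2 = 1) :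
    IsPure (blochM a1 a2 a3) := by
  have hmul : blochM a1 a2 a3 * blochM a1 a2 a3 = blochM a1 a2 a3 := by
    ext j k
    fin_cases j <;> fin_cases k <;>
    · simp [blochM, Matrix.mul_apply, Fin.sum_univ_two, Complex.ext_iff]
      constructor <;> nlinarith [h]
  have hH := blochM_isHermitian a1 a2 a3
  have hpsd : (blochM a1 a2 a3).PosSemidef := by
    have := Matrix.posSemidef_conjTranspose_mul_self (blochM a1 a2 a3)
    rwa [hH.eq, hmul] at this
  exact ⟨⟨hpsd, blochM_trace a1 a2 a3⟩, hmul⟩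

lemma density_decomp {ρ : Matrix (Fin 2) (Fin 2) ℂ} (h : IsDensity ρ) :
    ∃ a1 a2 a3 : ℝ, a1^2 + a2^2 + a3^2 ≤ 1 ∧ ρ = blochM a1 a2 a3 := by
  have hH : ρ.IsHermitian := h.1.isHermitian
  have h00 : ρ 0 0 = ((ρ 0 0).re : ℂ) := by
    have := congrArg (fun M => M 0 0) hH.eq
    simp [Matrix.conjTranspose_apply] at this
    exact (Complex.conj_eq_iff_re.mp this).symm
  have h11 : ρ 1 1 = ((ρ 1 1).re : ℂ) := by
    have := congrArg (fun M => M 1 1) hH.eq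
    simp [Matrix.conjTranspose_apply] at this
    exact (Complex.conj_eq_iff_re.mp this).symm
  have h10 : ρ 1 0 = starRingEnd ℂ (ρ 0 1) := by
    have := congrArg (fun M => M 1 0) hH.eq
    simp [Matrix.conjTranspose_apply] at this
    exact this.symm
  have htr : ρ 0 0 + ρ 1 1 = 1 := by
    have := h.2
    rwa [Matrix.trace_fin_two] at this
  have htrre : (ρ 0 0).re + (ρ 1 1).re = 1 := by
    have := congrArg Complex.re htr; simpa using this
  -- determinant nonneg
  have hdet : 0 ≤ (ρ.det).re := by
    have : (ρ.det) = ((∏ i, hH.eigenvalues i : ℝ) : ℂ) := by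
      rw [hH.det_eq_prod_eigenvalues]; push_cast; rfl
    rw [this, Complex.ofReal_re]
    exact Finset.prod_nonneg fun i _ => h.1.eigenvalues_nonneg i
  have hdet2 : (ρ.det).re = (ρ 0 0).re * (ρ 1 1).re - ((ρ 0 1).re^2 + (ρ 0 1).im^2) := by
    rw [Matrix.det_fin_two, h10]
    rw [h00, h11]
    simp [Complex.mul_re, Complex.mul_im]
    ring
  refine ⟨2 * (ρ 0 1).re, -2 * (ρ 0 1).im, (ρ 0 0).re - (ρ 1 1).re, by nlinarith, ?_⟩
  ext j k
  fin_cases j <;> fin_cases k <;>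
    simp [blochM, Complex.ext_iff]

  · exact ⟨by linarith, by simpa using congrArg Complex.im h00⟩
  · rw [h10]; simp
  · exact ⟨by linarith, by simpa using congrArg Complex.im h11⟩

lemma bs0 (s : ℝ) : (1/2 : ℂ) • (1 + (s : ℂ) • σ 0) = blochM s 0 0 := by
  ext j k; fin_cases j <;> fin_cases k <;>
    simp [blochM, σ, Matrix.one_apply, Complex.ext_iff] <;> (try ring)
lemma bs1 (s : ℝ) : (1/2 : ℂ) • (1 + (s : ℂ) • σ 1) = blochM 0 s 0 := by
  ext j k; fin_cases j <;> fin_cases k <;>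
    simp [blochM, σ, Matrix.one_apply, Complex.ext_iff] <;> (try ring)
lemma bs2 (s : ℝ) : (1/2 : ℂ) • (1 + (s : ℂ) • σ 2) = blochM 0 0 s := by
  ext j k; fin_cases j <;> fin_cases k <;>
    simp [blochM, σ, Matrix.one_apply, Complex.ext_iff] <;> (try ring)

lemma sum_sdiff_fin3 (p : Fin 3 → ℝ) (i : Fin 3) :
    ∑ k ∈ Finset.univ \ {i}, p k = (p 0 + p 1 + p 2) - p i := by
  rw [Finset.sum_sdiff_eq_sub (Finset.subset_univ _), Fin.sum_univ_three,
    Finset.sum_singleton]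

lemma sigma_pure (i : Fin 3) (s : ℝ) (hs : s = 1 ∨ s = -1) :
    IsPure ((1/2 : ℂ) • (1 + (s : ℂ) • σ i)) := by
  obtain rfl | rfl | rfl : i = 0 ∨ i = 1 ∨ i = 2 := by omega
  · rw [bs0]; apply blochM_pure; rcases hs with rfl | rfl <;> norm_num
  · rw [bs1]; apply blochM_pure; rcases hs with rfl | rfl <;> norm_num
  · rw [bs2]; apply blochM_pure; rcases hs with rfl | rfl <;> norm_num

lemma attain (p : Fin 3 → ℝ) (i : Fin 3) :
    ∃ s t : ℝ, (s = 1 ∨ s = -1) ∧ (t = 1 ∨ t = -1) ∧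
      (0 ≤ 1 - 2 * (∑ k ∈ Finset.univ \ {i}, p k) → s = 1 ∧ t = 1) ∧
      ((pauliChannel p ((1/2 : ℂ) • (1 + (s : ℂ) • σ i)) *
          ((1/2 : ℂ) • (1 + (t : ℂ) • σ i))).trace).re =
        (1 + |1 - 2 * (∑ k ∈ Finset.univ \ {i}, p k)|) / 2 := by
  rw [sum_sdiff_fin3]
  by_cases h0 : 0 ≤ 1 - 2 * ((p 0 + p 1 + p 2) - p i)
  · refine ⟨1, 1, Or.inl rfl, Or.inl rfl, fun _ => ⟨rfl, rfl⟩, ?_⟩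
    rw [_root_.abs_of_nonneg h0]
    obtain rfl | rfl | rfl : i = 0 ∨ i = 1 ∨ i = 2 := by omega
    · rw [bs0, key]; ring
    · rw [bs1, key]; ring
    · rw [bs2, key]; ring
  · refine ⟨-1, 1, Or.inr rfl, Or.inl rfl, fun h => absurd h h0, ?_⟩
    rw [_root_.abs_of_neg (not_le.mp h0)]
    obtain rfl | rfl | rfl : i = 0 ∨ i = 1 ∨ i = 2 := by omega
    · rw [bs0, bs0, key]; ring
    · rw [bs1, bs1, key]; ring
    · rw [bs2, bs2, key]; ring

theorem pauli_channel_max_overlap (p : Fin 3 → ℝ) (hp : ∀ i, 0 ≤ p i)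
    (hsum : p 0 + p 1 + p 2 ≤ 1) :
    (IsGreatest {x : ℝ | ∃ ρ τ : Matrix (Fin 2) (Fin 2) ℂ, IsDensity ρ ∧ IsPure τ ∧
        x = ((pauliChannel p ρ * τ).trace).re}
      ((1 + Finset.univ.sup' Finset.univ_nonempty
          (fun i => |1 - 2 * (∑ j ∈ Finset.univ \ {i}, p j)|)) / 2)) ∧
    (∀ i : Fin 3,
      (∀ j : Fin 3, |1 - 2 * (∑ k ∈ Finset.univ \ {j}, p k)| ≤
        |1 - 2 * (∑ k ∈ Finset.univ \ {i}, p k)|) →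
      ∃ s t : ℝ, (s = 1 ∨ s = -1) ∧ (t = 1 ∨ t = -1) ∧
        (0 ≤ 1 - 2 * (∑ k ∈ Finset.univ \ {i}, p k) → s = 1 ∧ t = 1) ∧
        ((pauliChannel p ((1/2 : ℂ) • (1 + (s : ℂ) • σ i)) *
            ((1/2 : ℂ) • (1 + (t : ℂ) • σ i))).trace).re =
          (1 + |1 - 2 * (∑ k ∈ Finset.univ \ {i}, p k)|) / 2) := by
  refine ⟨⟨?_, ?_⟩, fun i _ => attain p i⟩
  · -- membership
    obtain ⟨i, -, hi⟩ := Finset.exists_mem_eq_sup' (Finset.univ_nonempty (α := Fin 3))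
      (fun i => |1 - 2 * (∑ j ∈ Finset.univ \ {i}, p j)|)
    obtain ⟨s, t, hs, ht, -, hv⟩ := attain p i
    refine ⟨_, _, (sigma_pure i s hs).1, sigma_pure i t ht, ?_⟩
    rw [hv, hi]
  · -- upper bound
    rintro x ⟨ρ, τ, hρ, hτ, rfl⟩
    obtain ⟨a1, a2, a3, ha, rfl⟩ := density_decomp hρ
    obtain ⟨b1, b2, b3, hb, rfl⟩ := density_decomp hτ.1
    rw [key]
    set M : ℝ := Finset.univ.sup' Finset.univ_nonempty
      (fun i => |1 - 2 * (∑ j ∈ Finset.univ \ {i}, p j)|) with hM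
    have hc : ∀ j : Fin 3, |1 - 2 * ((p 0 + p 1 + p 2) - p j)| ≤ M := by
      intro j
      have h2 : |1 - 2 * (∑ k ∈ Finset.univ \ {j}, p k)| ≤ M :=
        Finset.le_sup' (f := fun i => |1 - 2 * (∑ j ∈ Finset.univ \ {i}, p j)|)
          (Finset.mem_univ j)
      rwa [sum_sdiff_fin3] at h2
    have hM0 : 0 ≤ M := le_trans (abs_nonneg _) (hc 0)
    have hc1 := abs_le.mp (by simpa using hc 0)
    have hc2 := abs_le.mp (by simpa using hc 1)
    have hc3 := abs_le.mp (by simpa using hc 2)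
    have e1 : (1 - 2*(p 1 + p 2)) * a1 * b1 ≤ M * (a1^2 + b1^2) / 2 := by
      nlinarith [mul_nonneg (by linarith [hc1.2] : (0:ℝ) ≤ M - (1 - 2*(p 1 + p 2))) (sq_nonneg (a1 + b1)),
        mul_nonneg (by linarith [hc1.1] : (0:ℝ) ≤ M + (1 - 2*(p 1 + p 2))) (sq_nonneg (a1 - b1))]
    have e2 : (1 - 2*(p 0 + p 2)) * a2 * b2 ≤ M * (a2^2 + b2^2) / 2 := by
      nlinarith [mul_nonneg (by linarith [hc2.2] : (0:ℝ) ≤ M - (1 - 2*(p 0 + p 2))) (sq_nonneg (a2 + b2)),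
        mul_nonneg (by linarith [hc2.1] : (0:ℝ) ≤ M + (1 - 2*(p 0 + p 2))) (sq_nonneg (a2 - b2))]
    have e3 : (1 - 2*(p 0 + p 1)) * a3 * b3 ≤ M * (a3^2 + b3^2) / 2 := by
      nlinarith [mul_nonneg (by linarith [hc3.2] : (0:ℝ) ≤ M - (1 - 2*(p 0 + p 1))) (sq_nonneg (a3 + b3)),
        mul_nonneg (by linarith [hc3.1] : (0:ℝ) ≤ M + (1 - 2*(p 0 + p 1))) (sq_nonneg (a3 - b3))]
    nlinarith [e1, e2, e3, hM0, ha, hb]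
end

section
/- Encoding via the states [α₊], [α₋] with Bloch vectors (±√(1-z²), 0, z), and decoding the output of 𝒜_{p,n} with the projective measurement {[x+], I - [x+]} where |x+⟩ = (|0⟩+|1⟩)/√2, induces a binary symmetric channel with flip probability q(z) = (1 - √(1-z²)·√(1-p))/2, independent of n. -/
open Matrix Complex

noncomputable def K (p n : ℝ) : Fin 4 → Matrix (Fin 2) (Fin 2) ℂ
  | 0 => (Real.sqrt (1 - n) : ℂ) • !![1, 0; 0, (Real.sqrt (1 - p) : ℂ)]
  | 1 => (Real.sqrt (p * (1 - n)) : ℂ) • !![0, 1; 0, 0]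
  | 2 => (Real.sqrt n : ℂ) • !![(Real.sqrt (1 - p) : ℂ), 0; 0, 1]
  | 3 => (Real.sqrt (p * n) : ℂ) • !![0, 0; 1, 0]

/-- The generalized amplitude damping channel. -/
noncomputable def GAD (p n : ℝ) (ρ : Matrix (Fin 2) (Fin 2) ℂ) : Matrix (Fin 2) (Fin 2) ℂ :=
  ∑ i, K p n i * ρ * (K p n i)ᴴ

noncomputable def σx : Matrix (Fin 2) (Fin 2) ℂ := !![0, 1; 1, 0]
noncomputable def σz : Matrix (Fin 2) (Fin 2) ℂ := !![1, 0; 0, -1]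

set_option maxHeartbeats 1000000 in
theorem gad_n3_induced_bsc (p n z : ℝ) (hp : p ∈ Set.Icc (0:ℝ) 1)
    (hn : n ∈ Set.Icc (0:ℝ) 1) (hz : z ∈ Set.Icc (-1:ℝ) 1) :
    ((1 - (1/2 : ℂ) • (1 + σx)) *
        GAD p n ((1/2 : ℂ) • (1 + ((Real.sqrt (1 - z ^ 2) : ℝ) : ℂ) • σx + (z : ℂ) • σz))).trace =
      (((1 - Real.sqrt (1 - z ^ 2) * Real.sqrt (1 - p)) / 2 : ℝ) : ℂ) ∧
    (((1/2 : ℂ) • (1 + σx)) *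
        GAD p n ((1/2 : ℂ) • (1 + ((-Real.sqrt (1 - z ^ 2) : ℝ) : ℂ) • σx + (z : ℂ) • σz))).trace =
      (((1 - Real.sqrt (1 - z ^ 2) * Real.sqrt (1 - p)) / 2 : ℝ) : ℂ) := by
  obtain ⟨hp0, hp1⟩ := hp
  obtain ⟨hn0, hn1⟩ := hn
  have ha' : ((Real.sqrt (1 - n) : ℝ) : ℂ) ^ 2 = ((1 - n : ℝ) : ℂ) := by
    rw [← Complex.ofReal_pow, Real.sq_sqrt (by linarith)]
  have hb' : ((Real.sqrt (p * (1 - n)) : ℝ) : ℂ) ^ 2 = ((p * (1 - n) : ℝ) : ℂ) := by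
    rw [← Complex.ofReal_pow, Real.sq_sqrt (by nlinarith)]
  have hc' : ((Real.sqrt n : ℝ) : ℂ) ^ 2 = ((n : ℝ) : ℂ) := by
    rw [← Complex.ofReal_pow, Real.sq_sqrt hn0]
  have hd' : ((Real.sqrt (p * n) : ℝ) : ℂ) ^ 2 = ((p * n : ℝ) : ℂ) := by
    rw [← Complex.ofReal_pow, Real.sq_sqrt (by nlinarith)]
  have hb2' : ((Real.sqrt (p - p * n) : ℝ) : ℂ) ^ 2 = ((p - p * n : ℝ) : ℂ) := by
    rw [← Complex.ofReal_pow, Real.sq_sqrt (by nlinarith)]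
  have he' : ((Real.sqrt (1 - p) : ℝ) : ℂ) ^ 2 = ((1 - p : ℝ) : ℂ) := by
    rw [← Complex.ofReal_pow, Real.sq_sqrt (by linarith)]
  have ha : (Real.sqrt (1 - n)) ^ 2 = 1 - n := Real.sq_sqrt (by linarith)
  have hb : (Real.sqrt (p * (1 - n))) ^ 2 = p * (1 - n) := Real.sq_sqrt (by nlinarith)
  have hc : (Real.sqrt n) ^ 2 = n := Real.sq_sqrt hn0
  have hd : (Real.sqrt (p * n)) ^ 2 = p * n := Real.sq_sqrt (by nlinarith)
  have he : (Real.sqrt (1 - p)) ^ 2 = 1 - p := Real.sq_sqrt (by linarith)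
  constructor <;>
  · simp only [GAD, K, σx, σz, Matrix.trace_fin_two, Matrix.mul_apply, Fin.sum_univ_four,
      Fin.sum_univ_two, Matrix.smul_apply, Matrix.add_apply, Matrix.sub_apply, Matrix.one_apply,
      Matrix.conjTranspose_apply, Matrix.cons_val_zero, Matrix.cons_val_one, Matrix.head_cons,
      Matrix.head_fin_const, star_smul, smul_eq_mul, Matrix.of_apply, Matrix.cons_val',
      Matrix.empty_val', Matrix.cons_val_fin_one, star_mul', Complex.star_def,
      Complex.conj_ofReal, _root_.map_one, _root_.map_zero, map_neg]
    norm_num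
    set a : ℂ := ((Real.sqrt (1 - n) : ℝ) : ℂ) with hA
    set b : ℂ := ((Real.sqrt (p * (1 - n)) : ℝ) : ℂ) with hB
    set c : ℂ := ((Real.sqrt n : ℝ) : ℂ) with hC
    set d : ℂ := ((Real.sqrt (p * n) : ℝ) : ℂ) with hD
    set e : ℂ := ((Real.sqrt (1 - p) : ℝ) : ℂ) with hE
    have ea : a ^ 2 = 1 - (n : ℂ) := by
      rw [hA, ← Complex.ofReal_pow, ha]; push_cast; ring
    have eb : b ^ 2 = (p : ℂ) * (1 - (n : ℂ)) := by
      rw [hB, ← Complex.ofReal_pow, hb]; push_cast; ring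
    have ec : c ^ 2 = (n : ℂ) := by
      rw [hC, ← Complex.ofReal_pow, hc]
    have ed : d ^ 2 = (p : ℂ) * (n : ℂ) := by
      rw [hD, ← Complex.ofReal_pow, hd]; push_cast; ring
    have ee : e ^ 2 = 1 - (p : ℂ) := by
      rw [hE, ← Complex.ofReal_pow, he]; push_cast; ring
    ring_nf
    simp only [ea, eb, ec, ed, ee]
    push_cast
    ring
end
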